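/- The multiplicative dynamic feedback product c @̌ d := c ∘̄ δ_{(d^{⧢−1} ∘ c)^{∘−1}} defines a right group action of the shuffle group (ℝ^m_{pi}⟨⟨X'⟩⟩, ⧢, 1) on ℝ^q⟨⟨X⟩⟩: c @̌ 1 = c and (c @̌ d₁) @̌ d₂ = c @̌ (d₁ ⧢ d₂) for all purely improper d₁, d₂. -/

import Mathlib

/-!
A series is determined by its constant term and its left derivatives `x⁻¹c`, and the
coefficients of `c ⧢ d`, `c ∘ e` and `c ∘̄ δ_d` on words of length `< n` only involve
coefficients of the arguments on such words. Both composition products are substitutions of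
series for letters, with `x⁻¹(c ∘̄ δ_d) = d_x ⧢ (x⁻¹c ∘̄ δ_d)` (`d_0 = 1`) and
`x₀⁻¹(c ∘ e) = Σ_i e_i ⧢ (x'ᵢ⁻¹c ∘ e)`, so left distributivity of `⧢`, mixed associativity
and the right-action property all follow by induction on word length. The defining equation
`e = d^{⧢-1} ∘̄ δ_e` of the feedback inverse gains one order of agreement per iteration, so it
has exactly one solution. With `gᵢ = dᵢ^{⧢-1} ∘ c` one has `(d₁ ⧢ d₂)^{⧢-1} ∘ c = g₁ ⧢ g₂`, and
uniqueness identifies `(g₁ ⧢ g₂)^{∘-1}` with `δ_{g₁^{∘-1}} ∘ δ_{(g₂ ∘̄ δ_{g₁^{∘-1}})^{∘-1}}`,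
which is what the right-action property needs.
-/

open scoped BigOperators

namespace FPS

/-- A (noncommutative) formal power series over alphabet `X` is a map from words to `ℝ`. -/
abbrev Series (X : Type*) := List X → ℝ

noncomputable section

variable {X : Type*} [DecidableEq X]

/-- The series `1·∅`. -/
def one : Series X := fun η => if η = [] then 1 else 0

/-- Cauchy (concatenation) product. -/
def cauchy (c d : Series X) : Series X := fun η =>
  ∑ i ∈ Finset.range (η.length + 1), c (η.take i) * d (η.drop i)

/-- Shuffle product. -/
def sh (c d : Series X) : List X → ℝ
  | [] => c [] * d []
  | x :: t => sh (fun w => c (x :: w)) d t + sh c (fun w => d (x :: w)) t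

/-- Cauchy powers. -/
def cpow (c : Series X) : ℕ → Series X
  | 0 => one
  | k + 1 => cauchy c (cpow c k)

/-- Shuffle powers. -/
def shpow (c : Series X) : ℕ → Series X
  | 0 => one
  | k + 1 => sh c (shpow c k)

/-- The proper series `1 - s/(s,∅)` entering the inverse formulas (negated proper part of `s/(s,∅)`). -/
def sprime (s : Series X) : Series X := fun w => if w = [] then 0 else - (s w / s [])

/-- Cauchy inverse `(s,∅)⁻¹ Σ_k (s')^k` of a purely improper series. -/
def cInv (s : Series X) : Series X := fun η =>
  (s [])⁻¹ * ∑ k ∈ Finset.range (η.length + 1), cpow (sprime s) k η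

/-- Shuffle inverse `(s,∅)⁻¹ Σ_k (s')^{⧢k}` of a purely improper series. -/
def shInv (s : Series X) : Series X := fun η =>
  (s [])⁻¹ * ∑ k ∈ Finset.range (η.length + 1), shpow (sprime s) k η

/-- The order: minimal length of a word in the support (`⊤` for the zero series). -/
def ord (c : Series X) : ℕ∞ := sInf ((fun η : List X => (η.length : ℕ∞)) '' {η | c η ≠ 0})

/-- `σ^n` with `σ^⊤ = 0`. -/
def powE (σ : ℝ) : ℕ∞ → ℝ := fun n => if n = ⊤ then 0 else σ ^ n.toNat

/-- The ultrametric `κ(c,d) = σ^{ord(c-d)}`. -/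
def kappa (σ : ℝ) (c d : Series X) : ℝ := powE σ (ord (c - d))

/-- Order of a vector of series (minimum over components). -/
def ordV {n : ℕ} (c : Fin n → Series X) : ℕ∞ := ⨅ i, ord (c i)

/-- Ultrametric on vectors of series. -/
def kappaV (σ : ℝ) {n : ℕ} (c d : Fin n → Series X) : ℝ := powE σ (ordV (c - d))

/-- Proper part `c - (c,∅)∅`. -/
def properPart (c : Series X) : Series X := fun w => if w = [] then 0 else c w

/-- Left concatenation by a letter: `x·s`. -/
def leftc (x : X) (s : Series X) : Series X := fun η =>
  match η with
  | [] => 0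
  | y :: t => if y = x then s t else 0

end

noncomputable section

/-- `φ̄_d(η)` : the algebra homomorphism defining the multiplicative mixed composition
product, with `φ̄_d(x_0)(w) = x_0 w` and `φ̄_d(x_i)(w) = x_i (d_i ⧢ w)`. -/
def phiWord {m : ℕ} (d : Fin m → Series (Fin (m + 1))) :
    List (Fin (m + 1)) → Series (Fin (m + 1)) → Series (Fin (m + 1))
  | [], w => w
  | i :: t, w =>
      Fin.cases (leftc 0 (phiWord d t w)) (fun j => leftc j.succ (sh (d j) (phiWord d t w))) i

/-- Multiplicative mixed composition product `c ∘̄ δ_d = Σ_η (c,η) φ̄_d(η)(1)`. -/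
def mix {m : ℕ} (c : Series (Fin (m + 1))) (d : Fin m → Series (Fin (m + 1))) :
    Series (Fin (m + 1)) := fun η =>
  ∑ k ∈ Finset.range (η.length + 1),
    ∑ v : List.Vector (Fin (m + 1)) k, c v.toList * phiWord d v.toList one η

/-- `ψ_e(η)` : the algebra homomorphism defining the composition product, with
`ψ_e(x'_i)(w) = x_0 (e_i ⧢ w)`, `e_0 = 1∅`. -/
def psiWord {ℓ m : ℕ} (e : Fin ℓ → Series (Fin (m + 1))) :
    List (Fin (ℓ + 1)) → Series (Fin (m + 1)) → Series (Fin (m + 1))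
  | [], w => w
  | i :: t, w => leftc 0 (sh (Fin.cases one e i) (psiWord e t w))

/-- Composition product `c ∘ e = Σ_η (c,η) ψ_e(η)(1)`. -/
def comp {ℓ m : ℕ} (c : Series (Fin (ℓ + 1))) (e : Fin ℓ → Series (Fin (m + 1))) :
    Series (Fin (m + 1)) := fun η =>
  ∑ k ∈ Finset.range (η.length + 1),
    ∑ v : List.Vector (Fin (ℓ + 1)) k, c v.toList * psiWord e v.toList one η

/-- The multiplicative composition product on `δ`-series:
`δ_c ∘ δ_d = δ_{d ⧢ (c ∘̄ δ_d)}`, expressed on the underlying series. -/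
def star {m : ℕ} (c d : Fin m → Series (Fin (m + 1))) : Fin m → Series (Fin (m + 1)) :=
  fun i => sh (d i) (mix (c i) d)

/-- The all-ones series vector (generating series of the identity `δ_1`). -/
def oneV {X : Type*} [DecidableEq X] (m : ℕ) : Fin m → Series X := fun _ => one

open Classical in
/-- The inverse `d^{∘-1}` in the multiplicative dynamic output feedback group: the unique
solution of `e = d^{⧢-1} ∘̄ δ_e`. -/
def dynInv {m : ℕ} (d : Fin m → Series (Fin (m + 1))) : Fin m → Series (Fin (m + 1)) :=
  if h : ∃ e : Fin m → Series (Fin (m + 1)), e = fun i => mix (shInv (d i)) e then h.choose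
  else oneV m

/-- Shuffle power of a family: `c^{⧢n} = c_1^{⧢n_1} ⧢ ⋯ ⧢ c_ℓ^{⧢n_ℓ}`. -/
def shFam {X : Type*} [DecidableEq X] {ℓ : ℕ} (c : Fin ℓ → Series X) (n : Fin ℓ →₀ ℕ) :
    Series X :=
  (List.finRange ℓ).foldr (fun i acc => sh (shpow (c i) (n i)) acc) one

/-- Wiener-Fliess composition product `d ∘̂ c = Σ_{η∈X̃*} (d,η) c^{⧢η}` of a commutative
series `d` with a (proper) noncommutative series vector `c`. -/
def wf {X : Type*} [DecidableEq X] {ℓ : ℕ} (d : MvPowerSeries (Fin ℓ) ℝ)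
    (c : Fin ℓ → Series X) : Series X := fun η =>
  ∑ n ∈ Finset.Iic (Finsupp.equivFunOnFinite.symm fun _ : Fin ℓ => η.length),
    MvPowerSeries.coeff n d * shFam c n η

end


/-- The multiplicative dynamic feedback product `c @̌ d = c ∘̄ δ_{(d^{⧢-1} ∘ c)^{∘-1}}`. -/
noncomputable def feedback {m q : ℕ} (c : Fin q → Series (Fin (m + 1)))
    (d : Fin m → Series (Fin (q + 1))) : Fin q → Series (Fin (m + 1)) :=
  fun i => mix (c i) (dynInv fun j => comp (shInv (d j)) c)

section Derivative

variable {X : Type*}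

def lderiv (x : X) : Series X →ₗ[ℝ] Series X := LinearMap.funLeft ℝ ℝ (List.cons x)

theorem lderiv_apply (x : X) (c : Series X) (w : List X) : lderiv x c w = c (x :: w) := rfl

theorem ext_lderiv {c d : Series X} (h₀ : c [] = d []) (h : ∀ x, lderiv x c = lderiv x d) :
    c = d := by
  funext w
  cases w with
  | nil => exact h₀
  | cons x t => exact congrFun (h x) t

def AgreeBelow (n : ℕ) (c d : Series X) : Prop := ∀ w : List X, w.length < n → c w = d w

namespace AgreeBelow

variable {n : ℕ} {c d e : Series X}

protected theorem refl (n : ℕ) (c : Series X) : AgreeBelow n c c := fun _ _ => rfl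

protected theorem symm (h : AgreeBelow n c d) : AgreeBelow n d c := fun w hw => (h w hw).symm

protected theorem trans (h : AgreeBelow n c d) (h' : AgreeBelow n d e) : AgreeBelow n c e :=
  fun w hw => (h w hw).trans (h' w hw)

theorem mono {k : ℕ} (h : AgreeBelow n c d) (hk : k ≤ n) : AgreeBelow k c d :=
  fun w hw => h w (hw.trans_le hk)

protected theorem add {c' d' : Series X} (h : AgreeBelow n c d) (h' : AgreeBelow n c' d') :
    AgreeBelow n (c + c') (d + d') :=
  fun w hw => congrArg₂ (· + ·) (h w hw) (h' w hw)

protected theorem sum {ι : Type*} {s : Finset ι} {f g : ι → Series X}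
    (h : ∀ i ∈ s, AgreeBelow n (f i) (g i)) : AgreeBelow n (∑ i ∈ s, f i) (∑ i ∈ s, g i) :=
  fun w hw => by simpa only [Finset.sum_apply] using Finset.sum_congr rfl fun i hi => h i hi w hw

protected theorem lderiv (h : AgreeBelow (n + 1) c d) (x : X) :
    AgreeBelow n (lderiv x c) (lderiv x d) :=
  fun w hw => h (x :: w) (by simpa using hw)

end AgreeBelow

theorem agreeBelow_zero (c d : Series X) : AgreeBelow 0 c d := fun _ hw => absurd hw (by omega)

theorem agreeBelow_succ_iff {n : ℕ} {c d : Series X} :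
    AgreeBelow (n + 1) c d ↔ c [] = d [] ∧ ∀ x, AgreeBelow n (lderiv x c) (lderiv x d) := by
  refine ⟨fun h => ⟨h [] (by simp), h.lderiv⟩, fun ⟨h₀, h⟩ w hw => ?_⟩
  cases w with
  | nil => exact h₀
  | cons x t => exact h x t (by simpa using hw)

theorem eq_of_forall_agreeBelow {c d : Series X} (h : ∀ n, AgreeBelow n c d) : c = d :=
  funext fun w => h (w.length + 1) w (Nat.lt_succ_self _)

end Derivative

section Shuffle

variable {X : Type*}

theorem sh_nil (c d : Series X) : sh c d [] = c [] * d [] := rfl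

theorem sh_cons (x : X) (t : List X) (c d : Series X) :
    sh c d (x :: t) = sh (lderiv x c) d t + sh c (lderiv x d) t := rfl

theorem lderiv_sh (x : X) (c d : Series X) :
    lderiv x (sh c d) = sh (lderiv x c) d + sh c (lderiv x d) := rfl

theorem sh_comm (c d : Series X) : sh c d = sh d c := by
  funext w
  induction w generalizing c d with
  | nil => exact mul_comm _ _
  | cons x t ih =>
    rw [sh_cons, sh_cons, ih (lderiv x c), ih c, add_comm]

theorem sh_add_right (c d e : Series X) : sh c (d + e) = sh c d + sh c e := by
  funext w
  induction w generalizing c d e with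
  | nil => exact mul_add _ _ _
  | cons x t ih =>
    simp only [sh_cons, map_add, ih, Pi.add_apply]
    ring

theorem sh_smul_right (r : ℝ) (c d : Series X) : sh c (r • d) = r • sh c d := by
  funext w
  induction w generalizing c d with
  | nil => exact mul_left_comm _ _ _
  | cons x t ih =>
    simp only [sh_cons, map_smul, ih, Pi.smul_apply, smul_eq_mul, mul_add]

theorem sh_add_left (c d e : Series X) : sh (c + d) e = sh c e + sh d e := by
  rw [sh_comm, sh_add_right, sh_comm e, sh_comm e]

theorem sh_smul_left (r : ℝ) (c d : Series X) : sh (r • c) d = r • sh c d := by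
  rw [sh_comm, sh_smul_right, sh_comm]

theorem sh_sum_right {ι : Type*} (s : Finset ι) (c : Series X) (f : ι → Series X) :
    sh c (∑ i ∈ s, f i) = ∑ i ∈ s, sh c (f i) :=
  map_sum (AddMonoidHom.mk' (sh c) (sh_add_right c)) f s

theorem sh_sum_left {ι : Type*} (s : Finset ι) (c : Series X) (f : ι → Series X) :
    sh (∑ i ∈ s, f i) c = ∑ i ∈ s, sh (f i) c := by
  simp only [sh_comm _ c, sh_sum_right]

theorem sh_zero_right (c : Series X) : sh c 0 = 0 :=
  map_zero (AddMonoidHom.mk' (sh c) (sh_add_right c))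

theorem sh_zero_left (c : Series X) : sh 0 c = 0 := by
  rw [sh_comm, sh_zero_right]

theorem sh_sub_left (c d e : Series X) : sh (c - d) e = sh c e - sh d e := by
  rw [sub_eq_add_neg, ← neg_one_smul ℝ d, sh_add_left, sh_smul_left, neg_one_smul,
    ← sub_eq_add_neg]

theorem lderiv_one (x : X) : lderiv x (one : Series X) = 0 := by
  funext w
  simp [lderiv_apply, one]

theorem sh_one_right (c : Series X) : sh c one = c := by
  funext w
  induction w generalizing c with
  | nil => exact mul_one _
  | cons x t ih =>
    rw [sh_cons, lderiv_one, sh_zero_right, Pi.zero_apply, add_zero, ih]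
    rfl

theorem sh_one_left (c : Series X) : sh one c = c := by
  rw [sh_comm, sh_one_right]

theorem sh_assoc (c d e : Series X) : sh (sh c d) e = sh c (sh d e) := by
  funext w
  induction w generalizing c d e with
  | nil => exact mul_assoc _ _ _
  | cons x t ih =>
    simp only [sh_cons, lderiv_sh, sh_add_left, sh_add_right, Pi.add_apply, ih]
    ring

theorem sh_left_comm (c d e : Series X) : sh c (sh d e) = sh d (sh c e) := by
  rw [← sh_assoc, sh_comm c d, sh_assoc]

theorem AgreeBelow.sh {n : ℕ} {c c' d d' : Series X} (hc : AgreeBelow n c c')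
    (hd : AgreeBelow n d d') : AgreeBelow n (sh c d) (sh c' d') := by
  induction n generalizing c c' d d' with
  | zero => exact agreeBelow_zero _ _
  | succ n ih =>
    refine agreeBelow_succ_iff.2
      ⟨by rw [sh_nil, sh_nil, hc [] n.succ_pos, hd [] n.succ_pos], fun x => ?_⟩
    rw [lderiv_sh, lderiv_sh]
    exact (ih (hc.lderiv x) (hd.mono n.le_succ)).add (ih (hc.mono n.le_succ) (hd.lderiv x))

theorem sh_agreeBelow_zero {p q : ℕ} {c d : Series X} (hc : AgreeBelow p c 0)
    (hd : AgreeBelow q d 0) : AgreeBelow (p + q) (sh c d) 0 := by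
  intro w
  induction w generalizing p q c d with
  | nil =>
    intro hw
    rcases Nat.eq_zero_or_pos p with rfl | hp
    · simp [sh_nil, hd [] (by simpa using hw)]
    · simp [sh_nil, hc [] hp]
  | cons x t ih =>
    intro hw
    have hc' : AgreeBelow (p - 1) (lderiv x c) 0 := fun w hw' => hc (x :: w) (by simp; omega)
    have hd' : AgreeBelow (q - 1) (lderiv x d) 0 := fun w hw' => hd (x :: w) (by simp; omega)
    simp only [List.length_cons] at hw
    rw [sh_cons, ih hc' hd (by omega), ih hc hd' (by omega)]
    simp only [Pi.zero_apply, add_zero]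

end Shuffle

section FixedPoint

variable {ι X : Type*}

def Contracting (F : (ι → Series X) → ι → Series X) : Prop :=
  ∀ n e e', (∀ i, AgreeBelow n (e i) (e' i)) → ∀ i, AgreeBelow (n + 1) (F e i) (F e' i)

namespace Contracting

variable {F : (ι → Series X) → ι → Series X}

theorem eq_of_isFixedPt (hF : Contracting F) {e e' : ι → Series X}
    (he : Function.IsFixedPt F e) (he' : Function.IsFixedPt F e') : e = e' := by
  have key : ∀ n i, AgreeBelow n (e i) (e' i) := by
    intro n
    induction n with
    | zero => exact fun i => agreeBelow_zero _ _
    | succ n ih =>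
      intro i
      have := hF n e e' ih i
      rwa [he, he'] at this
  funext i
  exact eq_of_forall_agreeBelow fun n => key n i

theorem exists_isFixedPt (hF : Contracting F) : ∃ e, Function.IsFixedPt F e := by
  set u : ℕ → ι → Series X := fun n => F^[n] 0 with hu_def
  have hu_succ : ∀ n, u (n + 1) = F (u n) := fun n => Function.iterate_succ_apply' F n 0
  have hu : ∀ n k i, AgreeBelow n (u n i) (u (n + k) i) := by
    intro n k
    induction n with
    | zero => exact fun i => agreeBelow_zero _ _
    | succ n ih => simpa only [Nat.succ_add, hu_succ] using hF n _ _ ih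
  -- the coefficient at `w` is read off an iterate that has already stabilised there
  set e : ι → Series X := fun i w => u (w.length + 1) i w
  have he : ∀ n i, AgreeBelow n (e i) (u n i) := fun n i w hw => by
    simpa only [Nat.add_sub_cancel' (show w.length + 1 ≤ n from hw)]
      using hu (w.length + 1) (n - (w.length + 1)) i w (Nat.lt_succ_self _)
  refine ⟨e, funext fun i => funext fun w => ?_⟩
  rw [hF w.length _ _ (fun j => he w.length j) i w (Nat.lt_succ_self _), ← hu_succ]

end Contracting

end FixedPoint

section ShuffleInverse

variable {X : Type*}

theorem shpow_agreeBelow_zero {a : Series X} (ha : a [] = 0) (k : ℕ) :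
    AgreeBelow k (shpow a k) 0 := by
  induction k with
  | zero => exact agreeBelow_zero _ _
  | succ k ih =>
    have ha' : AgreeBelow 1 a 0 := fun w hw => by
      rw [List.length_eq_zero_iff.1 (Nat.lt_one_iff.1 hw)]
      exact ha
    have h := sh_agreeBelow_zero ha' ih
    rw [Nat.add_comm] at h
    exact h

theorem sprime_nil (s : Series X) : sprime s [] = 0 := if_pos rfl

theorem shInv_nil (s : Series X) : shInv s [] = (s [])⁻¹ := by
  simp [shInv, shpow, one]

theorem shInv_agreeBelow (s : Series X) (N : ℕ) :
    AgreeBelow N (shInv s) ((s [])⁻¹ • ∑ k ∈ Finset.range N, shpow (sprime s) k) := by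
  intro w hw
  simp only [shInv, Pi.smul_apply, Finset.sum_apply, smul_eq_mul]
  congr 1
  refine Finset.sum_subset (Finset.range_subset_range.2 (by omega)) fun k _ hk => ?_
  exact shpow_agreeBelow_zero (sprime_nil s) k w (by simp at hk; omega)

theorem sh_one_sub_geom_sum (a : Series X) (N : ℕ) :
    sh (one - a) (∑ k ∈ Finset.range N, shpow a k) = one - shpow a N := by
  induction N with
  | zero => simp [sh_zero_right, shpow]
  | succ N ih =>
    rw [Finset.sum_range_succ, sh_add_right, ih, sh_sub_left, sh_one_left]
    simp only [shpow]
    abel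

theorem smul_one_sub_sprime {s : Series X} (h : s [] ≠ 0) : s [] • (one - sprime s) = s := by
  funext w
  cases w with
  | nil => simp [one, sprime]
  | cons x t => simpa [one, sprime] using mul_div_cancel₀ (s (x :: t)) h

theorem sh_shInv {s : Series X} (h : s [] ≠ 0) : sh s (shInv s) = one := by
  refine eq_of_forall_agreeBelow fun N => ?_
  have hgeom : sh s ((s [])⁻¹ • ∑ k ∈ Finset.range N, shpow (sprime s) k)
      = one - shpow (sprime s) N := by
    rw [← congrArg (sh · _) (smul_one_sub_sprime h), sh_smul_left, sh_smul_right, smul_smul, mul_inv_cancel₀ h, one_smul, sh_one_sub_geom_sum]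
  refine ((AgreeBelow.refl N s).sh (shInv_agreeBelow s N)).trans ?_
  rw [hgeom]
  intro w hw
  simp [shpow_agreeBelow_zero (sprime_nil s) N w hw]

theorem shInv_eq_of_sh_eq_one {s t : Series X} (h : s [] ≠ 0) (ht : sh s t = one) :
    shInv s = t := by
  rw [← sh_one_left (shInv s), ← ht, sh_comm s t, sh_assoc, sh_shInv h, sh_one_right]

theorem shInv_sh {a b : Series X} (ha : a [] ≠ 0) (hb : b [] ≠ 0) :
    shInv (sh a b) = sh (shInv a) (shInv b) :=
  shInv_eq_of_sh_eq_one (by rw [sh_nil]; exact mul_ne_zero ha hb) <| by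
    rw [sh_assoc, sh_left_comm b, sh_shInv hb, sh_one_right, sh_shInv ha]

theorem shInv_one : shInv (one : Series X) = one :=
  shInv_eq_of_sh_eq_one (by simp [one]) (sh_one_left one)

end ShuffleInverse

theorem sum_vector_succ {α M : Type*} [Fintype α] [AddCommMonoid M] {k : ℕ}
    (f : List.Vector α (k + 1) → M) :
    ∑ v, f v = ∑ i, ∑ v : List.Vector α k, f (i ::ᵥ v) := by
  rw [← Fintype.sum_prod_type' (f := fun i v => f (i ::ᵥ v))]
  exact (Fintype.sum_equiv
    { toFun := fun p : α × List.Vector α k => p.1 ::ᵥ p.2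
      invFun := fun v => (v.head, v.tail)
      left_inv := fun p => by simp
      right_inv := fun v => v.cons_head_tail } _ _ fun _ => rfl).symm

section WordSubstitution

variable {X Y : Type*}

/-- The image of a word under the substitution sending the letter `i` to the operator
`a ↦ ∑_y y (W y i ⧢ a)`, applied to `1`. -/
def substWord (W : X → Y → Series X) : List Y → Series X
  | [] => one
  | i :: v => fun
    | [] => 0
    | y :: t => sh (W y i) (substWord W v) t

theorem lderiv_substWord_cons (W : X → Y → Series X) (y : X) (i : Y) (v : List Y) :
    lderiv y (substWord W (i :: v)) = sh (W y i) (substWord W v) := rfl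

theorem substWord_agreeBelow_zero (W : X → Y → Series X) :
    ∀ v : List Y, AgreeBelow v.length (substWord W v) 0
  | [] => agreeBelow_zero _ _
  | i :: v => agreeBelow_succ_iff.2 ⟨rfl, fun y => by
      simpa [lderiv_substWord_cons] using
        sh_agreeBelow_zero (agreeBelow_zero (W y i) 0) (substWord_agreeBelow_zero W v)⟩

variable [Fintype Y]

def wordSubstDeg (c : Series Y) (W : X → Y → Series X) (k : ℕ) : Series X :=
  ∑ v : List.Vector Y k, c v.toList • substWord W v.toList

def wordSubst (c : Series Y) (W : X → Y → Series X) : Series X := fun η =>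
  ∑ k ∈ Finset.range (η.length + 1), wordSubstDeg c W k η

variable (c : Series Y) (W : X → Y → Series X)

theorem wordSubstDeg_agreeBelow_zero (k : ℕ) : AgreeBelow k (wordSubstDeg c W k) 0 := by
  intro w hw
  simp only [wordSubstDeg, Finset.sum_apply, Pi.smul_apply, Pi.zero_apply]
  refine Finset.sum_eq_zero fun v _ => ?_
  rw [substWord_agreeBelow_zero W v.toList w (by simpa using hw), Pi.zero_apply, smul_zero]

theorem wordSubst_agreeBelow (N : ℕ) :
    AgreeBelow N (wordSubst c W) (∑ k ∈ Finset.range N, wordSubstDeg c W k) := by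
  intro w hw
  rw [Finset.sum_apply]
  refine Finset.sum_subset (Finset.range_subset_range.2 (by omega)) fun k _ hk => ?_
  exact wordSubstDeg_agreeBelow_zero c W k w (by simp at hk; omega)

theorem wordSubstDeg_zero : wordSubstDeg c W 0 = c [] • one := by
  rw [wordSubstDeg, Fintype.sum_eq_single List.Vector.nil fun v hv => (hv v.eq_nil).elim]
  rfl

theorem lderiv_wordSubstDeg_succ (y : X) (k : ℕ) :
    lderiv y (wordSubstDeg c W (k + 1)) = ∑ i, sh (W y i) (wordSubstDeg (lderiv i c) W k) := by
  rw [wordSubstDeg, sum_vector_succ, map_sum]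
  refine Finset.sum_congr rfl fun i _ => ?_
  rw [map_sum, wordSubstDeg, sh_sum_right]
  refine Finset.sum_congr rfl fun v _ => ?_
  rw [map_smul, List.Vector.toList_cons, lderiv_substWord_cons, sh_smul_right]
  rfl

theorem wordSubst_nil : wordSubst c W [] = c [] := by
  simp [wordSubst, wordSubstDeg_zero, one]

theorem lderiv_wordSubst (y : X) :
    lderiv y (wordSubst c W) = ∑ i, sh (W y i) (wordSubst (lderiv i c) W) := by
  refine eq_of_forall_agreeBelow fun N => ?_
  have hdeg : lderiv y (∑ k ∈ Finset.range (N + 1), wordSubstDeg c W k)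
      = ∑ i, sh (W y i) (∑ k ∈ Finset.range N, wordSubstDeg (lderiv i c) W k) := by
    rw [Finset.sum_range_succ', map_add, wordSubstDeg_zero, map_smul, lderiv_one, smul_zero,
      add_zero, map_sum]
    simp only [lderiv_wordSubstDeg_succ, sh_sum_right]
    exact Finset.sum_comm
  refine ((wordSubst_agreeBelow c W (N + 1)).lderiv y).trans ?_
  rw [hdeg]
  exact AgreeBelow.sum fun i _ => (AgreeBelow.refl N _).sh (wordSubst_agreeBelow _ W N).symm

theorem wordSubst_add (c' : Series Y) : wordSubst (c + c') W = wordSubst c W + wordSubst c' W := by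
  funext η
  simp only [wordSubst, wordSubstDeg, Pi.add_apply, add_smul, Finset.sum_add_distrib,
    Finset.sum_apply]

theorem wordSubst_zero : wordSubst (0 : Series Y) W = 0 :=
  map_zero (AddMonoidHom.mk' (wordSubst · W) (wordSubst_add · W))

theorem wordSubst_sum {ι : Type*} (s : Finset ι) (f : ι → Series Y) :
    wordSubst (∑ i ∈ s, f i) W = ∑ i ∈ s, wordSubst (f i) W :=
  map_sum (AddMonoidHom.mk' (wordSubst · W) (wordSubst_add · W)) f s

theorem wordSubst_one : wordSubst (one : Series Y) W = one :=
  ext_lderiv (by simp [wordSubst_nil, one]) fun y => by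
    simp [lderiv_wordSubst, lderiv_one, wordSubst_zero, sh_zero_right]

end WordSubstitution

section MixedComposition

variable {m : ℕ}

theorem phiWord_one_eq_substWord (d : Fin m → Series (Fin (m + 1))) (v : List (Fin (m + 1))) :
    phiWord d v one = substWord (fun y i => if y = i then Fin.cases one d i else 0) v := by
  induction v with
  | nil => rfl
  | cons i v ih =>
    funext w
    cases w with
    | nil => cases i using Fin.cases <;> simp [phiWord, leftc, substWord]
    | cons y t =>
      show _ = sh _ (substWord _ v) t
      rw [← ih]
      cases i using Fin.cases with
      | zero => by_cases hy : y = 0 <;> simp [phiWord, leftc, hy, sh_one_left, sh_zero_left]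
      | succ j => by_cases hy : y = j.succ <;> simp [phiWord, leftc, hy, sh_zero_left]

theorem mix_eq_wordSubst (c : Series (Fin (m + 1))) (d : Fin m → Series (Fin (m + 1))) :
    mix c d = wordSubst c (fun y i => if y = i then Fin.cases one d i else 0) := by
  funext η
  simp only [mix, wordSubst, wordSubstDeg, Finset.sum_apply, Pi.smul_apply, smul_eq_mul,
    phiWord_one_eq_substWord]

variable (d : Fin m → Series (Fin (m + 1)))

theorem mix_nil (c : Series (Fin (m + 1))) : mix c d [] = c [] := by
  rw [mix_eq_wordSubst, wordSubst_nil]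

theorem lderiv_mix (c : Series (Fin (m + 1))) (y : Fin (m + 1)) :
    lderiv y (mix c d) = sh (Fin.cases one d y) (mix (lderiv y c) d) := by
  rw [mix_eq_wordSubst, lderiv_wordSubst, mix_eq_wordSubst,
    Finset.sum_eq_single y (fun i _ hi => by rw [if_neg (Ne.symm hi), sh_zero_left]) (by simp),
    if_pos rfl]

theorem mix_add_left (a b : Series (Fin (m + 1))) : mix (a + b) d = mix a d + mix b d := by
  simp only [mix_eq_wordSubst, wordSubst_add]

theorem mix_zero_left : mix (0 : Series (Fin (m + 1))) d = 0 := by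
  rw [mix_eq_wordSubst, wordSubst_zero]

theorem mix_sum_left {ι : Type*} (s : Finset ι) (f : ι → Series (Fin (m + 1))) :
    mix (∑ i ∈ s, f i) d = ∑ i ∈ s, mix (f i) d := by
  simp only [mix_eq_wordSubst, wordSubst_sum]

theorem mix_one : mix (one : Series (Fin (m + 1))) d = one := by
  rw [mix_eq_wordSubst, wordSubst_one]

theorem mix_oneV (a : Series (Fin (m + 1))) : mix a (oneV m) = a := by
  funext w
  induction w generalizing a with
  | nil => exact mix_nil _ a
  | cons y t ih =>
    have hone : Fin.cases one (oneV m) y = (one : Series (Fin (m + 1))) := by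
      cases y using Fin.cases <;> rfl
    show lderiv y (mix a (oneV m)) t = lderiv y a t
    rw [lderiv_mix, hone, sh_one_left, ih]

theorem mix_sh (a b : Series (Fin (m + 1))) : mix (sh a b) d = sh (mix a d) (mix b d) := by
  refine eq_of_forall_agreeBelow fun n => ?_
  induction n generalizing a b with
  | zero => exact agreeBelow_zero _ _
  | succ n ih =>
    refine agreeBelow_succ_iff.2 ⟨by simp only [mix_nil, sh_nil], fun y => ?_⟩
    rw [lderiv_mix, lderiv_sh, lderiv_sh, lderiv_mix, lderiv_mix, mix_add_left, sh_add_right,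
      sh_assoc, sh_left_comm (mix a d)]
    exact ((AgreeBelow.refl n _).sh (ih _ _)).add ((AgreeBelow.refl n _).sh (ih _ _))

theorem mix_agreeBelow {n : ℕ} {d' : Fin m → Series (Fin (m + 1))}
    (h : ∀ j, AgreeBelow n (d j) (d' j)) (c : Series (Fin (m + 1))) :
    AgreeBelow (n + 1) (mix c d) (mix c d') := by
  induction n generalizing c with
  | zero => exact agreeBelow_succ_iff.2 ⟨by rw [mix_nil, mix_nil], fun _ => agreeBelow_zero _ _⟩
  | succ n ih =>
    refine agreeBelow_succ_iff.2 ⟨by rw [mix_nil, mix_nil], fun y => ?_⟩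
    have hw : AgreeBelow (n + 1) (Fin.cases one d y) (Fin.cases one d' y) := by
      cases y using Fin.cases with
      | zero => exact AgreeBelow.refl _ _
      | succ j => exact h j
    rw [lderiv_mix, lderiv_mix]
    exact hw.sh (ih (fun j => (h j).mono n.le_succ) _)

theorem contracting_mix (s : Fin m → Series (Fin (m + 1))) :
    Contracting fun (e : Fin m → Series (Fin (m + 1))) i => mix (s i) e :=
  fun _ _ _ h i => mix_agreeBelow _ h (s i)

theorem cases_one_star (e : Fin m → Series (Fin (m + 1))) (y : Fin (m + 1)) :
    Fin.cases one (star d e) y = sh (Fin.cases one e y) (mix (Fin.cases one d y) e) := by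
  cases y using Fin.cases with
  | zero => simp [mix_one, sh_one_left]
  | succ j => rfl

theorem mix_mix (e : Fin m → Series (Fin (m + 1))) (a : Series (Fin (m + 1))) :
    mix (mix a d) e = mix a (star d e) := by
  refine eq_of_forall_agreeBelow fun n => ?_
  induction n generalizing a with
  | zero => exact agreeBelow_zero _ _
  | succ n ih =>
    refine agreeBelow_succ_iff.2 ⟨by simp only [mix_nil], fun y => ?_⟩
    rw [lderiv_mix, lderiv_mix, lderiv_mix, mix_sh, cases_one_star, sh_assoc]
    exact (AgreeBelow.refl n _).sh ((AgreeBelow.refl n _).sh (ih _))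

theorem shInv_mix {s : Series (Fin (m + 1))} (hs : s [] ≠ 0) :
    shInv (mix s d) = mix (shInv s) d :=
  shInv_eq_of_sh_eq_one (by rwa [mix_nil]) (by rw [← mix_sh, sh_shInv hs, mix_one])

end MixedComposition

section Composition

variable {ℓ m : ℕ}

theorem psiWord_one_eq_substWord (e : Fin ℓ → Series (Fin (m + 1))) (v : List (Fin (ℓ + 1))) :
    psiWord e v one = substWord (fun y i => if y = 0 then Fin.cases one e i else 0) v := by
  induction v with
  | nil => rfl
  | cons i v ih =>
    funext w
    cases w with
    | nil => rfl
    | cons y t =>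
      show _ = sh _ (substWord _ v) t
      rw [← ih]
      by_cases hy : y = 0 <;> simp [psiWord, leftc, hy, sh_zero_left]

theorem comp_eq_wordSubst (c : Series (Fin (ℓ + 1))) (e : Fin ℓ → Series (Fin (m + 1))) :
    comp c e = wordSubst c (fun y i => if y = 0 then Fin.cases one e i else 0) := by
  funext η
  simp only [comp, wordSubst, wordSubstDeg, Finset.sum_apply, Pi.smul_apply, smul_eq_mul,
    psiWord_one_eq_substWord]

variable (e : Fin ℓ → Series (Fin (m + 1)))

theorem comp_nil (c : Series (Fin (ℓ + 1))) : comp c e [] = c [] := by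
  rw [comp_eq_wordSubst, wordSubst_nil]

theorem lderiv_zero_comp (c : Series (Fin (ℓ + 1))) :
    lderiv 0 (comp c e) = ∑ i, sh (Fin.cases one e i) (comp (lderiv i c) e) := by
  simp only [comp_eq_wordSubst, lderiv_wordSubst, if_true]

theorem lderiv_succ_comp (c : Series (Fin (ℓ + 1))) (j : Fin m) :
    lderiv j.succ (comp c e) = 0 := by
  simp [comp_eq_wordSubst, lderiv_wordSubst, sh_zero_left]

theorem comp_add_left (a b : Series (Fin (ℓ + 1))) : comp (a + b) e = comp a e + comp b e := by
  simp only [comp_eq_wordSubst, wordSubst_add]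

theorem comp_one : comp (one : Series (Fin (ℓ + 1))) e = one := by
  rw [comp_eq_wordSubst, wordSubst_one]

theorem comp_sh (a b : Series (Fin (ℓ + 1))) : comp (sh a b) e = sh (comp a e) (comp b e) := by
  refine eq_of_forall_agreeBelow fun n => ?_
  induction n generalizing a b with
  | zero => exact agreeBelow_zero _ _
  | succ n ih =>
    refine agreeBelow_succ_iff.2 ⟨by simp only [comp_nil, sh_nil], fun y => ?_⟩
    cases y using Fin.cases with
    | zero =>
      rw [lderiv_sh, lderiv_zero_comp, lderiv_zero_comp, lderiv_zero_comp, sh_sum_left,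
        sh_sum_right, ← Finset.sum_add_distrib]
      refine AgreeBelow.sum fun i _ => ?_
      rw [lderiv_sh, comp_add_left, sh_add_right, sh_assoc, sh_left_comm (comp a e)]
      exact ((AgreeBelow.refl n _).sh (ih _ _)).add ((AgreeBelow.refl n _).sh (ih _ _))
    | succ j =>
      rw [lderiv_sh, lderiv_succ_comp, lderiv_succ_comp, lderiv_succ_comp, sh_zero_left,
        sh_zero_right, add_zero]
      exact AgreeBelow.refl n _

theorem cases_one_mix (f : Fin m → Series (Fin (m + 1))) (i : Fin (ℓ + 1)) :
    mix (Fin.cases one e i) f = Fin.cases one (fun j => mix (e j) f) i := by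
  cases i using Fin.cases with
  | zero => simp [mix_one]
  | succ j => rfl

theorem comp_mix (f : Fin m → Series (Fin (m + 1))) (a : Series (Fin (ℓ + 1))) :
    comp a (fun i => mix (e i) f) = mix (comp a e) f := by
  refine eq_of_forall_agreeBelow fun n => ?_
  induction n generalizing a with
  | zero => exact agreeBelow_zero _ _
  | succ n ih =>
    refine agreeBelow_succ_iff.2 ⟨by simp only [comp_nil, mix_nil], fun y => ?_⟩
    cases y using Fin.cases with
    | zero =>
      rw [lderiv_mix, lderiv_zero_comp, lderiv_zero_comp, Fin.cases_zero, sh_one_left,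
        mix_sum_left]
      simp only [mix_sh, cases_one_mix]
      exact AgreeBelow.sum fun i _ => (AgreeBelow.refl n _).sh (ih _)
    | succ j =>
      rw [lderiv_mix, lderiv_succ_comp, lderiv_succ_comp, mix_zero_left, sh_zero_right]
      exact AgreeBelow.refl n _

end Composition

section DynamicFeedbackGroup

variable {m : ℕ}

theorem dynInv_eq (g : Fin m → Series (Fin (m + 1))) :
    dynInv g = fun i => mix (shInv (g i)) (dynInv g) := by
  have h : ∃ e : Fin m → Series (Fin (m + 1)), e = fun i => mix (shInv (g i)) e :=
    (contracting_mix _).exists_isFixedPt.imp fun _ he => he.symm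
  rw [dynInv, dif_pos h]
  exact h.choose_spec

theorem dynInv_eq_of_eq {g e : Fin m → Series (Fin (m + 1))}
    (he : e = fun i => mix (shInv (g i)) e) : dynInv g = e :=
  (contracting_mix _).eq_of_isFixedPt (dynInv_eq g).symm he.symm

theorem dynInv_oneV : dynInv (oneV m : Fin m → Series (Fin (m + 1))) = oneV m :=
  dynInv_eq_of_eq (funext fun _ => by rw [oneV, shInv_one, mix_one])

theorem dynInv_sh {g h : Fin m → Series (Fin (m + 1))} (hg : ∀ j, g j [] ≠ 0)
    (hh : ∀ j, h j [] ≠ 0) :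
    dynInv (fun j => sh (g j) (h j)) = star (dynInv g) (dynInv fun j => mix (h j) (dynInv g)) := by
  refine dynInv_eq_of_eq (funext fun i => ?_)
  have hg' : mix (shInv (g i)) (star (dynInv g) (dynInv fun j => mix (h j) (dynInv g)))
      = mix (dynInv g i) (dynInv fun j => mix (h j) (dynInv g)) := by
    rw [← mix_mix, ← congrFun (dynInv_eq g) i]
  have hh' : mix (shInv (h i)) (star (dynInv g) (dynInv fun j => mix (h j) (dynInv g)))
      = (dynInv fun j => mix (h j) (dynInv g)) i := by
    rw [← mix_mix, ← shInv_mix _ (hh i), congrFun (dynInv_eq _) i]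
  rw [shInv_sh (hg i) (hh i), mix_sh, hg', hh', sh_comm]
  rfl

end DynamicFeedbackGroup

/-- The multiplicative dynamic feedback product is a right group action of
the shuffle group `(ℝ^m_{pi}⟨⟨X'⟩⟩, ⧢, 1)` on `ℝ^q⟨⟨X⟩⟩`:
`c @̌ 1 = c` and `(c @̌ d₁) @̌ d₂ = c @̌ (d₁ ⧢ d₂)`. -/
theorem mult_dyn_feedback_group_action (m q : ℕ)
    (c : Fin q → Series (Fin (m + 1)))
    (d₁ d₂ : Fin m → Series (Fin (q + 1)))
    (h₁ : ∀ j, d₁ j [] ≠ 0) (h₂ : ∀ j, d₂ j [] ≠ 0) :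
    feedback c (oneV m : Fin m → Series (Fin (q + 1))) = c ∧
    feedback (feedback c d₁) d₂ = feedback c (fun j => sh (d₁ j) (d₂ j)) := by
  have hne : ∀ d : Fin m → Series (Fin (q + 1)), (∀ j, d j [] ≠ 0) →
      ∀ j, comp (shInv (d j)) c [] ≠ 0 := fun d hd j => by
    rw [comp_nil, shInv_nil]
    exact inv_ne_zero (hd j)
  constructor
  · have hone : (fun j => comp (shInv ((oneV m : Fin m → Series (Fin (q + 1))) j)) c) = oneV m :=
      funext fun j => by rw [oneV, shInv_one, comp_one]; rfl
    funext i
    rw [feedback, hone, dynInv_oneV, mix_oneV]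
  · have hcomp : ∀ s, comp s (feedback c d₁)
        = mix (comp s c) (dynInv fun j => comp (shInv (d₁ j)) c) := comp_mix c _
    funext i
    simp only [feedback, hcomp, mix_mix, shInv_sh (h₁ _) (h₂ _), comp_sh,
      dynInv_sh (hne d₁ h₁) (hne d₂ h₂)]

end FPS
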